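/- For positive invertible operators A, B and p ∈ (0,1), the Furuta parametric relative operator entropy satisfies the two-sided bound (1/2)[(A♯ₚB)T₁₋ₚ(B⁻¹|A⁻¹)(A♯ₚB) + Tₚ(A|B)] ≤ Sₚ(A|B) ≤ (1/2)[−T₁₋ₚ(B|A) − (A♯ₚB)Tₚ(A⁻¹|B⁻¹)(A♯ₚB)] in the Loewner order. -/

import Mathlib

open scoped Real

variable {H : Type*} [NormedAddCommGroup H] [InnerProductSpace ℂ H] [CompleteSpace H]

/-- Square root via continuous functional calculus. -/
noncomputable def opSqrt (A : H →L[ℂ] H) : H →L[ℂ] H := cfc Real.sqrt A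

/-- Real power via continuous functional calculus. -/
noncomputable def opRpow (A : H →L[ℂ] H) (p : ℝ) : H →L[ℂ] H :=
  cfc (fun x : ℝ => x ^ p) A

/-- Logarithm via continuous functional calculus. -/
noncomputable def opLog (A : H →L[ℂ] H) : H →L[ℂ] H := cfc Real.log A

/-- Operator inverse (junk value `0` if not invertible). -/
noncomputable def opInv (A : H →L[ℂ] H) : H →L[ℂ] H := Ring.inverse A

/-- `A^{-1/2}`. -/
noncomputable def opInvSqrt (A : H →L[ℂ] H) : H →L[ℂ] H := opInv (opSqrt A)

/-- Weighted arithmetic mean `A ∇ₚ B`. -/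
noncomputable def wNabla (p : ℝ) (A B : H →L[ℂ] H) : H →L[ℂ] H := (1 - p) • A + p • B

/-- Weighted harmonic mean `A !ₚ B`. -/
noncomputable def wHarm (p : ℝ) (A B : H →L[ℂ] H) : H →L[ℂ] H :=
  opInv ((1 - p) • opInv A + p • opInv B)

/-- Weighted geometric mean `A ♯ₚ B`. -/
noncomputable def wGeom (p : ℝ) (A B : H →L[ℂ] H) : H →L[ℂ] H :=
  opSqrt A * opRpow (opInvSqrt A * B * opInvSqrt A) p * opSqrt A

/-- Relative operator entropy `S(A|B)`. -/
noncomputable def relEntropy (A B : H →L[ℂ] H) : H →L[ℂ] H :=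
  opSqrt A * opLog (opInvSqrt A * B * opInvSqrt A) * opSqrt A

/-- Furuta parametric relative operator entropy `Sₚ(A|B)`. -/
noncomputable def furutaEntropy (p : ℝ) (A B : H →L[ℂ] H) : H →L[ℂ] H :=
  opSqrt A * (opRpow (opInvSqrt A * B * opInvSqrt A) p *
    opLog (opInvSqrt A * B * opInvSqrt A)) * opSqrt A

/-- Tsallis relative operator entropy `Tₚ(A|B)`. -/
noncomputable def tsallisEntropy (p : ℝ) (A B : H →L[ℂ] H) : H →L[ℂ] H :=
  p⁻¹ • (wGeom p A B - A)

/-!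
Put `C = A^{-1/2} B A^{-1/2}`. Every operator in the two bounds is a congruence
`A^{1/2} f(C) A^{1/2}`: for `A ♯ₚ B`, `Sₚ(A|B)` and `Tₚ(A|B)` this is the definition, and for
the remaining ones it follows from the symmetry `B ♯₁₋ₚ A = A ♯ₚ B` and from
`A⁻¹ ♯ₚ B⁻¹ = (A ♯ₚ B)⁻¹`. The symmetry comes from the intertwining `T f(T*T) = f(TT*) T` for
`T = B^{1/2} A^{-1/2}`, for which `T*T = C` and `(TT*)⁻¹ = B^{-1/2} A B^{-1/2}`.

The scalar inequality `q x^p log x ≤ x^(p+q) - x^p` (that is, `log y ≤ y - 1` at `y = x^q`)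
lifts through the functional calculus of `C` and the congruence. The choices
`q = -p, 1 - p, p, p - 1` give `Tₚ(A|B) ≤ Sₚ(A|B) ≤ -T₁₋ₚ(B|A)` and
`(A♯ₚB) T₁₋ₚ(B⁻¹|A⁻¹) (A♯ₚB) ≤ Sₚ(A|B) ≤ -(A♯ₚB) Tₚ(A⁻¹|B⁻¹) (A♯ₚB)`; each side of the theorem
is the average of two of these.
-/

open CFC
open scoped Ring

theorem Real.mul_log_le_rpow_sub_one {x : ℝ} (hx : 0 < x) (q : ℝ) :
    q * Real.log x ≤ x ^ q - 1 := by
  rw [← Real.log_rpow hx]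
  exact Real.log_le_sub_one_of_pos (Real.rpow_pos_of_pos hx q)

theorem Real.mul_rpow_mul_log_le {x : ℝ} (hx : 0 < x) (p q : ℝ) :
    q * (x ^ p * Real.log x) ≤ x ^ (p + q) - x ^ p := by
  have := mul_le_mul_of_nonneg_left (Real.mul_log_le_rpow_sub_one hx q) (Real.rpow_nonneg hx.le p)
  rw [Real.rpow_add hx]
  linarith

section Ring

variable {M₀ : Type*} [MonoidWithZero M₀] {s : M₀}

theorem Ring.inverse_conj (hs : IsUnit s) (x : M₀) : (s * x * s)⁻¹ʳ = s⁻¹ʳ * x⁻¹ʳ * s⁻¹ʳ := by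
  rw [Ring.inverse_mul (.inr hs), Ring.inverse_mul (.inl hs), mul_assoc]

theorem conj_mul_conj_inverse_mul_conj (hs : IsUnit s) (x y z : M₀) :
    s * x * s * (s⁻¹ʳ * y * s⁻¹ʳ) * (s * z * s) = s * (x * y * z) * s := by
  simp only [mul_assoc, Ring.mul_inverse_cancel_left _ _ hs, Ring.inverse_mul_cancel_left _ _ hs]

theorem mul_smul_sub_mul_of_mul_eq_one {R : Type*} [Ring R] [Algebra ℝ R] {w w' : R}
    (h : w * w' = 1) (t : ℝ) (x : R) : w * (t • (w' - x)) * w = t • (w - w * x * w) := by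
  rw [mul_smul_comm, smul_mul_assoc, mul_sub, sub_mul, h, one_mul]

end Ring

section OrderedModule

variable {M : Type*} [AddCommGroup M] [Module ℝ M]

theorem half_smul_add_self (z : M) : (1 / 2 : ℝ) • (z + z) = z := by
  rw [← two_smul ℝ z, smul_smul]; norm_num

variable [PartialOrder M] [PosSMulMono ℝ M] {t : ℝ} {x y z : M}

theorem inv_smul_le_of_le_smul (ht : 0 < t) (h : x ≤ t • y) : t⁻¹ • x ≤ y := by
  simpa only [inv_smul_smul₀ ht.ne'] using smul_le_smul_of_nonneg_left h (inv_nonneg.2 ht.le)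

theorem le_inv_smul_of_smul_le (ht : 0 < t) (h : t • y ≤ x) : y ≤ t⁻¹ • x := by
  simpa only [inv_smul_smul₀ ht.ne'] using smul_le_smul_of_nonneg_left h (inv_nonneg.2 ht.le)

variable [IsOrderedAddMonoid M]

theorem half_smul_add_le (hx : x ≤ z) (hy : y ≤ z) : (1 / 2 : ℝ) • (x + y) ≤ z :=
  half_smul_add_self z ▸ smul_le_smul_of_nonneg_left (add_le_add hx hy) (by norm_num)

theorem le_half_smul_add (hx : z ≤ x) (hy : z ≤ y) : z ≤ (1 / 2 : ℝ) • (x + y) :=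
  half_smul_add_self z ▸ smul_le_smul_of_nonneg_left (add_le_add hx hy) (by norm_num)

end OrderedModule

section CStarAlgebra

variable {A : Type*} [CStarAlgebra A] [PartialOrder A] [StarOrderedRing A]

theorem IsStrictlyPositive.continuousOn_rpow {c : A} (hc : IsStrictlyPositive c) (q : ℝ) :
    ContinuousOn (· ^ q) (spectrum ℝ c) :=
  fun x hx => (Real.continuousAt_rpow_const x q (.inl (hc.spectrum_pos hx).ne')).continuousWithinAt

theorem IsStrictlyPositive.continuousOn_log {c : A} (hc : IsStrictlyPositive c) :
    ContinuousOn Real.log (spectrum ℝ c) :=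
  fun _ hx => (Real.continuousAt_log (hc.spectrum_pos hx).ne').continuousWithinAt

theorem CFC.smul_rpow_mul_log_le {c : A} (hc : IsStrictlyPositive c) (p q : ℝ) :
    q • (c ^ p * log c) ≤ c ^ (p + q) - c ^ p := by
  -- the continuity side conditions of the `cfc` lemmas below are found among these hypotheses
  have hp := hc.continuousOn_rpow p
  have hpq := hc.continuousOn_rpow (p + q)
  have hlog := hc.continuousOn_log
  have hmul := hp.mul hlog
  have hsmul := hmul.const_smul q
  have hsub := hpq.sub hp
  rw [rpow_eq_cfc_real hc.nonneg, rpow_eq_cfc_real hc.nonneg, log, ← cfc_mul _ _ c,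
    ← cfc_smul q _ c, ← cfc_sub _ _ c]
  exact cfc_mono fun x hx => Real.mul_rpow_mul_log_le (hc.spectrum_pos hx) p q

theorem CFC.ringInverse_rpow {a : A} (ha : IsStrictlyPositive a) (x : ℝ) :
    a⁻¹ʳ ^ x = a ^ (-x) := by
  rw [inverse_eq_rpow_neg_one, rpow_rpow a _ _ (by norm_num) ha, neg_one_mul]

theorem CFC.inverse_rpow' {a : A} (ha : IsStrictlyPositive a) (x : ℝ) :
    (a ^ x)⁻¹ʳ = a ^ (-x) := by
  rw [← mul_one (a ^ x)⁻¹ʳ, Ring.inverse_mul_eq_iff_eq_mul _ _ _ (ha.isUnit.cfcRpow x),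
    rpow_mul_rpow_neg x ha]

theorem IsUnit.mul_cfc_star_mul_self {T : A} (hT : IsUnit T) (f : ℝ → ℝ)
    (hf : ContinuousOn f (spectrum ℝ (star T * T)) := by cfc_cont_tac) :
    T * cfc f (star T * T) = cfc f (T * star T) * T := by
  -- polar decomposition `T = u |T|`; conjugation by the unitary `u` commutes with `cfc`
  set c := star T * T
  have hc : IsStrictlyPositive c :=
    CStarAlgebra.isStrictlyPositive_iff_eq_star_mul_self.2 ⟨T, hT, rfl⟩
  have hstar : star (c ^ (-(1 / 2) : ℝ)) = c ^ (-(1 / 2) : ℝ) := rpow_nonneg.isSelfAdjoint.star_eq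
  have hcc : c ^ (-(1 / 2) : ℝ) * c * c ^ (-(1 / 2) : ℝ) = 1 := conjugate_rpow_neg_one_half c
  set u := T * c ^ (-(1 / 2) : ℝ)
  have hu : u ∈ unitary A := by
    refine (hT.mul (hc.isUnit.cfcRpow _)).mem_unitary_of_star_mul_self ?_
    rw [star_mul, hstar, mul_assoc, ← mul_assoc (star T), ← mul_assoc]
    exact hcc
  have hTT : T * star T = u * c * star u := by
    simp only [u, star_mul, hstar, ← mul_assoc]
    rw [mul_assoc T, mul_assoc T, hcc, mul_one]
  have hTu : T = u * c ^ (1 / 2 : ℝ) := by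
    rw [mul_assoc, rpow_neg_mul_rpow _ hc, mul_one]
  have hconj : cfc f (u * c * star u) = u * cfc f c * star u :=
    (StarAlgHomClass.map_cfc (Unitary.conjStarAlgAut ℝ A ⟨u, hu⟩) f c hf
      (by show Continuous fun x => u * x * star u; fun_prop) hc.isSelfAdjoint
      (hc.isSelfAdjoint.conjugate u)).symm
  have hcomm : Commute (c ^ (1 / 2 : ℝ)) (cfc f c) := by
    rw [rpow_eq_cfc_real hc.nonneg]; exact cfc_commute_cfc _ _ c
  calc T * cfc f c = u * (c ^ (1 / 2 : ℝ) * cfc f c) := by rw [← mul_assoc, ← hTu]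
    _ = u * cfc f c * (star u * u) * c ^ (1 / 2 : ℝ) := by
      rw [hcomm.eq, Unitary.star_mul_self_of_mem hu]; noncomm_ring
    _ = cfc f (T * star T) * T := by
      rw [hTT, hconj]
      conv_rhs => rw [hTu]
      noncomm_ring

theorem IsUnit.mul_rpow_star_mul_self {T : A} (hT : IsUnit T) (q : ℝ) :
    T * (star T * T) ^ q = (T * star T) ^ q * T := by
  have hc : IsStrictlyPositive (star T * T) :=
    CStarAlgebra.isStrictlyPositive_iff_eq_star_mul_self.2 ⟨T, hT, rfl⟩
  rw [rpow_eq_cfc_real hc.nonneg, rpow_eq_cfc_real (mul_star_self_nonneg T)]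
  exact hT.mul_cfc_star_mul_self _ (hc.continuousOn_rpow q)

theorem CFC.conj_rpow_one_sub_comm {s r : A} (hs : IsSelfAdjoint s) (hr : IsSelfAdjoint r)
    (hsU : IsUnit s) (hrU : IsUnit r) (p : ℝ) :
    r * (r⁻¹ʳ * (s * s) * r⁻¹ʳ) ^ (1 - p) * r = s * (s⁻¹ʳ * (r * r) * s⁻¹ʳ) ^ p * s := by
  have hs' : star s⁻¹ʳ = s⁻¹ʳ := by rw [← Ring.inverse_star, hs.star_eq]
  set T := r * s⁻¹ʳ
  have hT : IsUnit T := hrU.mul hsU.ringInverse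
  have hTT : r⁻¹ʳ * (s * s) * r⁻¹ʳ = (T * star T)⁻¹ʳ := by
    simp only [T, star_mul, hs', hr.star_eq, Ring.inverse_mul (.inl hrU),
      Ring.inverse_mul (.inl hsU.ringInverse), Ring.inverse_inverse hsU, mul_assoc]
  have hc : s⁻¹ʳ * (r * r) * s⁻¹ʳ = star T * T := by
    simp only [T, star_mul, hs', hr.star_eq, mul_assoc]
  have hTT_pos : IsStrictlyPositive (T * star T) :=
    CStarAlgebra.isStrictlyPositive_iff_eq_mul_star_self.2 ⟨T, hT, rfl⟩
  have hc_pos : IsStrictlyPositive (star T * T) :=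
    CStarAlgebra.isStrictlyPositive_iff_eq_star_mul_self.2 ⟨T, hT, rfl⟩
  have hrrs : r * r * s⁻¹ʳ = s * (star T * T) := by
    rw [← hc]; simp only [mul_assoc, Ring.mul_inverse_cancel_left _ _ hsU]
  have hcc : star T * T * (star T * T) ^ (p - 1) = (star T * T) ^ p := by
    conv_lhs => enter [1]; rw [← rpow_one (star T * T)]
    rw [← rpow_add hc_pos.isUnit, add_sub_cancel]
  rw [hTT, hc, ringInverse_rpow hTT_pos]
  calc r * (T * star T) ^ (-(1 - p)) * r
      = r * ((T * star T) ^ (p - 1) * T) * (s * r⁻¹ʳ) * r := by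
        simp only [T, neg_sub, mul_assoc, Ring.inverse_mul_cancel_left _ _ hsU,
          Ring.inverse_mul_cancel _ hrU, mul_one]
    _ = r * r * s⁻¹ʳ * (star T * T) ^ (p - 1) * s := by
        rw [← hT.mul_rpow_star_mul_self]
        simp only [T, mul_assoc, Ring.inverse_mul_cancel _ hrU, mul_one]
    _ = s * (star T * T) ^ p * s := by
        rw [hrrs, mul_assoc s, hcc]

end CStarAlgebra

section Operator

variable {A B : H →L[ℂ] H}

theorem opSqrt_eq_sqrt (hA : 0 ≤ A) : opSqrt A = sqrt A := by
  rw [opSqrt, sqrt_eq_real_sqrt A hA, cfcₙ_eq_cfc]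

theorem opInvSqrt_eq_sqrt_ringInverse (hA : 0 ≤ A) : opInvSqrt A = sqrt A⁻¹ʳ := by
  rw [opInvSqrt, opInv, opSqrt_eq_sqrt hA, sqrt_ringInverse]

theorem opRpow_eq_rpow (hA : 0 ≤ A) (p : ℝ) : opRpow A p = A ^ p :=
  (rpow_eq_cfc_real hA).symm

theorem opSqrt_mul_opSqrt (hA : 0 ≤ A) : opSqrt A * opSqrt A = A := by
  rw [opSqrt_eq_sqrt hA, sqrt_mul_sqrt_self A hA]

theorem isSelfAdjoint_opSqrt (hA : 0 ≤ A) : IsSelfAdjoint (opSqrt A) := by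
  rw [opSqrt_eq_sqrt hA]; exact (sqrt_nonneg A).isSelfAdjoint

theorem isSelfAdjoint_opInvSqrt (hA : 0 ≤ A) : IsSelfAdjoint (opInvSqrt A) := by
  rw [opInvSqrt_eq_sqrt_ringInverse hA]; exact (sqrt_nonneg _).isSelfAdjoint

theorem isUnit_opSqrt (hA : IsStrictlyPositive A) : IsUnit (opSqrt A) := by
  rw [opSqrt_eq_sqrt hA.nonneg]; exact hA.isUnit_cfcSqrt

theorem opSqrt_mul_opInvSqrt (hA : IsStrictlyPositive A) : opSqrt A * opInvSqrt A = 1 :=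
  Ring.mul_inverse_cancel _ (isUnit_opSqrt hA)

theorem opInvSqrt_mul_opSqrt (hA : IsStrictlyPositive A) : opInvSqrt A * opSqrt A = 1 :=
  Ring.inverse_mul_cancel _ (isUnit_opSqrt hA)

theorem opSqrt_opInv (hA : IsStrictlyPositive A) : opSqrt (opInv A) = opInvSqrt A := by
  rw [opInv, opSqrt_eq_sqrt hA.ringInverse.nonneg, opInvSqrt_eq_sqrt_ringInverse hA.nonneg]

theorem opInvSqrt_opInv (hA : IsStrictlyPositive A) : opInvSqrt (opInv A) = opSqrt A := by
  rw [opInvSqrt, opSqrt_opInv hA, opInvSqrt, opInv, opInv, Ring.inverse_inverse (isUnit_opSqrt hA)]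

theorem isStrictlyPositive_opInvSqrt_conj (hA : IsStrictlyPositive A)
    (hB : IsStrictlyPositive B) : IsStrictlyPositive (opInvSqrt A * B * opInvSqrt A) :=
  IsStrictlyPositive.conjugate_of_isUnit_of_isSelfAdjoint B _ (isUnit_opSqrt hA).ringInverse
    (isSelfAdjoint_opInvSqrt hA.nonneg) hB

theorem opSqrt_mul_opInvSqrt_conj_mul_opSqrt (hA : IsStrictlyPositive A) :
    opSqrt A * (opInvSqrt A * B * opInvSqrt A) * opSqrt A = B := by
  simp only [mul_assoc, opInvSqrt_mul_opSqrt hA, mul_one]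
  simp only [← mul_assoc, opSqrt_mul_opInvSqrt hA, one_mul]

theorem opInv_opInvSqrt_conj (hA : IsStrictlyPositive A) :
    opInv (opInvSqrt A * B * opInvSqrt A) = opSqrt A * opInv B * opSqrt A := by
  simp only [opInvSqrt, opInv]
  rw [Ring.inverse_conj (isUnit_opSqrt hA).ringInverse, Ring.inverse_inverse (isUnit_opSqrt hA)]

theorem wGeom_one_sub_comm (hA : IsStrictlyPositive A) (hB : IsStrictlyPositive B) (p : ℝ) :
    wGeom (1 - p) B A = wGeom p A B := by
  have key := conj_rpow_one_sub_comm (isSelfAdjoint_opSqrt hA.nonneg)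
    (isSelfAdjoint_opSqrt hB.nonneg) (isUnit_opSqrt hA) (isUnit_opSqrt hB) p
  rw [opSqrt_mul_opSqrt hA.nonneg, opSqrt_mul_opSqrt hB.nonneg] at key
  rw [wGeom, wGeom, opRpow_eq_rpow (isStrictlyPositive_opInvSqrt_conj hA hB).nonneg,
    opRpow_eq_rpow (isStrictlyPositive_opInvSqrt_conj hB hA).nonneg]
  exact key

theorem wGeom_opInv (hA : IsStrictlyPositive A) (hB : IsStrictlyPositive B) (p : ℝ) :
    wGeom p (opInv A) (opInv B) = opInv (wGeom p A B) := by
  have hc := isStrictlyPositive_opInvSqrt_conj hA hB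
  rw [wGeom, wGeom, opSqrt_opInv hA, opInvSqrt_opInv hA, ← opInv_opInvSqrt_conj hA,
    opRpow_eq_rpow (A := opInv _) hc.ringInverse.nonneg, opRpow_eq_rpow hc.nonneg]
  simp only [opInvSqrt, opInv] at hc ⊢
  rw [Ring.inverse_conj (isUnit_opSqrt hA), ringInverse_rpow hc, inverse_rpow' hc]

theorem wGeom_mul_opInv_self (hA : IsStrictlyPositive A) (hB : IsStrictlyPositive B) (p : ℝ) :
    wGeom p A B * opInv (wGeom p A B) = 1 := by
  have hc := isStrictlyPositive_opInvSqrt_conj hA hB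
  refine Ring.mul_inverse_cancel _ ?_
  rw [wGeom, opRpow_eq_rpow hc.nonneg]
  exact ((isUnit_opSqrt hA).mul (hc.isUnit.cfcRpow p)).mul (isUnit_opSqrt hA)

theorem wGeom_mul_opInv_conj_mul_wGeom (hA : IsStrictlyPositive A) (hB : IsStrictlyPositive B)
    (p r : ℝ) :
    wGeom p A B * opInv (opSqrt A * (opInvSqrt A * B * opInvSqrt A) ^ r * opSqrt A) * wGeom p A B
      = opSqrt A * (opInvSqrt A * B * opInvSqrt A) ^ (p + (p - r)) * opSqrt A := by
  have hc := isStrictlyPositive_opInvSqrt_conj hA hB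
  rw [wGeom, opRpow_eq_rpow hc.nonneg, opInv, Ring.inverse_conj (isUnit_opSqrt hA),
    conj_mul_conj_inverse_mul_conj (isUnit_opSqrt hA), inverse_rpow' hc,
    ← rpow_add hc.isUnit, ← rpow_add hc.isUnit, add_assoc, ← sub_eq_neg_add]

theorem smul_furutaEntropy_le (hA : IsStrictlyPositive A) (hB : IsStrictlyPositive B)
    (p q : ℝ) : q • furutaEntropy p A B ≤
      opSqrt A * (opInvSqrt A * B * opInvSqrt A) ^ (p + q) * opSqrt A - wGeom p A B := by
  have hc := isStrictlyPositive_opInvSqrt_conj hA hB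
  rw [furutaEntropy, wGeom, opRpow_eq_rpow hc.nonneg, ← sub_mul, ← mul_sub, ← smul_mul_assoc,
    ← mul_smul_comm]
  exact (isSelfAdjoint_opSqrt hA.nonneg).conjugate_le_conjugate (smul_rpow_mul_log_le hc p q)

theorem tsallisEntropy_le_furutaEntropy (hA : IsStrictlyPositive A) (hB : IsStrictlyPositive B)
    {p : ℝ} (hp : 0 < p) : tsallisEntropy p A B ≤ furutaEntropy p A B := by
  have h := smul_furutaEntropy_le hA hB p (-p)
  rw [add_neg_cancel, rpow_zero _ (isStrictlyPositive_opInvSqrt_conj hA hB).nonneg, mul_one,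
    opSqrt_mul_opSqrt hA.nonneg, neg_smul, neg_le, neg_sub] at h
  rw [tsallisEntropy]
  exact inv_smul_le_of_le_smul hp h

theorem furutaEntropy_le_neg_tsallisEntropy (hA : IsStrictlyPositive A)
    (hB : IsStrictlyPositive B) {p : ℝ} (hp : p < 1) :
    furutaEntropy p A B ≤ -tsallisEntropy (1 - p) B A := by
  have h := smul_furutaEntropy_le hA hB p (1 - p)
  rw [add_sub_cancel, rpow_one _ (isStrictlyPositive_opInvSqrt_conj hA hB).nonneg,
    opSqrt_mul_opInvSqrt_conj_mul_opSqrt hA] at h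
  rw [tsallisEntropy, wGeom_one_sub_comm hA hB, ← smul_neg, neg_sub]
  exact le_inv_smul_of_smul_le (sub_pos.2 hp) h

theorem furutaEntropy_le_neg_wGeom_mul_tsallisEntropy_opInv_mul_wGeom
    (hA : IsStrictlyPositive A) (hB : IsStrictlyPositive B) {p : ℝ} (hp : 0 < p) :
    furutaEntropy p A B ≤
      -(wGeom p A B * tsallisEntropy p (opInv A) (opInv B) * wGeom p A B) := by
  have h := smul_furutaEntropy_le hA hB p p
  have hWAW := wGeom_mul_opInv_conj_mul_wGeom hA hB p 0
  rw [rpow_zero _ (isStrictlyPositive_opInvSqrt_conj hA hB).nonneg, mul_one,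
    opSqrt_mul_opSqrt hA.nonneg, sub_zero] at hWAW
  rw [tsallisEntropy, wGeom_opInv hA hB,
    mul_smul_sub_mul_of_mul_eq_one (wGeom_mul_opInv_self hA hB p), hWAW, ← smul_neg, neg_sub]
  exact le_inv_smul_of_smul_le hp h

theorem wGeom_mul_tsallisEntropy_opInv_mul_wGeom_le_furutaEntropy
    (hA : IsStrictlyPositive A) (hB : IsStrictlyPositive B) {p : ℝ} (hp : p < 1) :
    wGeom p A B * tsallisEntropy (1 - p) (opInv B) (opInv A) * wGeom p A B ≤
      furutaEntropy p A B := by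
  have h := smul_furutaEntropy_le hA hB p (p - 1)
  rw [← neg_smul_neg, neg_sub, smul_neg, neg_le, neg_sub] at h
  have hWBW := wGeom_mul_opInv_conj_mul_wGeom hA hB p 1
  rw [rpow_one _ (isStrictlyPositive_opInvSqrt_conj hA hB).nonneg,
    opSqrt_mul_opInvSqrt_conj_mul_opSqrt hA] at hWBW
  rw [tsallisEntropy,
    wGeom_one_sub_comm (A := opInv A) (B := opInv B) hA.ringInverse hB.ringInverse,
    wGeom_opInv hA hB, mul_smul_sub_mul_of_mul_eq_one (wGeom_mul_opInv_self hA hB p), hWBW]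
  exact inv_smul_le_of_le_smul (sub_pos.2 hp) h

end Operator

/-- Two-sided bound for the Furuta entropy in terms of Tsallis relative
operator entropies:
`(1/2)[(A♯ₚB)T₁₋ₚ(B⁻¹|A⁻¹)(A♯ₚB) + Tₚ(A|B)] ≤ Sₚ(A|B)
  ≤ (1/2)[−T₁₋ₚ(B|A) − (A♯ₚB)Tₚ(A⁻¹|B⁻¹)(A♯ₚB)]`. -/
theorem furutaEntropy_tsallis_bounds (A B : H →L[ℂ] H) (hA : 0 ≤ A)
    (hA' : IsUnit A) (hB : 0 ≤ B) (hB' : IsUnit B) (p : ℝ)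
    (hp : p ∈ Set.Ioo (0:ℝ) 1) :
    (1/2 : ℝ) • (wGeom p A B * tsallisEntropy (1 - p) (opInv B) (opInv A) * wGeom p A B
        + tsallisEntropy p A B) ≤ furutaEntropy p A B ∧
      furutaEntropy p A B ≤
        (1/2 : ℝ) • (-tsallisEntropy (1 - p) B A
          - wGeom p A B * tsallisEntropy p (opInv A) (opInv B) * wGeom p A B) := by
  obtain ⟨hp0, hp1⟩ := hp
  have hApos := hA'.isStrictlyPositive hA
  have hBpos := hB'.isStrictlyPositive hB
  refine ⟨half_smul_add_le ?_ (tsallisEntropy_le_furutaEntropy hApos hBpos hp0), ?_⟩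
  · exact wGeom_mul_tsallisEntropy_opInv_mul_wGeom_le_furutaEntropy hApos hBpos hp1
  · rw [sub_eq_add_neg]
    exact le_half_smul_add (furutaEntropy_le_neg_tsallisEntropy hApos hBpos hp1)
      (furutaEntropy_le_neg_wGeom_mul_tsallisEntropy_opInv_mul_wGeom hApos hBpos hp0)
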